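/- arXiv:1910.14471 — 4 statements merged into one kernel-verified Lean document; each statement's English description precedes it below -/
import Mathlib

section
/- Let I₁ and I₂ be infinite sets. Then the Boolean algebras Powerset(I₁) and Powerset(I₂), each equipped with the unary predicate Fin interpreted as the ideal of finite subsets, are elementarily equivalent as structures in the language of Boolean algebras with one extra unary predicate. -/
open FirstOrder

/-- The language of Boolean algebras `{∧, ∨, ¬, 0, 1}` expanded by a unary predicate `Fin`. -/
def boolFinLang : FirstOrder.Language where
  Functions n := match n with
    | 0 => Bool   -- the two constants 0 and 1
    | 1 => Unit   -- complement ¬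
    | 2 => Bool   -- the two binary operations ∧ and ∨
    | _ + 3 => Empty
  Relations n := match n with
    | 1 => Unit   -- the unary predicate Fin
    | _ => Empty

/-- The powerset Boolean algebra `Powerset(I)` with `Fin` interpreted as finiteness. -/
instance boolFinStructure (I : Type*) : boolFinLang.Structure (Set I) where
  funMap {n} f x :=
    match n, f, x with
    | 0, true, _ => Set.univ
    | 0, false, _ => ∅
    | 1, _, x => (x 0)ᶜ
    | 2, true, x => x 0 ∪ x 1
    | 2, false, x => x 0 ∩ x 1
    | _ + 3, f, _ => nomatch f
  RelMap {n} r x :=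
    match n, r, x with
    | 1, _, x => (x 0).Finite


/-! A tuple `w` of subsets of `α` cuts `α` into the cells `{z | (z ∈ w i)ᵢ = s}`, the fibres of
its `profile`. A term of the language is evaluated pointwise, so whether an equation between terms
or an atom `Fin t` holds of `w` only depends on which cells are nonempty, resp. finite. Call two
tuples over `α` and `β` equivalent if corresponding cells have the same size in `ℕ∞` (all infinite
sizes count as equal). Any new subset of `α` splits each cell into two pieces, and the
corresponding cell over `β` can be split into pieces of the same two sizes; this back-and-forth
property shows by induction that equivalent tuples satisfy the same formulas. For infinite `α` and
`β` the empty tuples are equivalent, each having the whole set as its only cell. -/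

/-- The two-element algebra, read as `Powerset(Unit)`, in which every element is finite. -/
instance propBoolFinStructure : boolFinLang.Structure Prop where
  funMap {n} f x :=
    match n, f, x with
    | 0, true, _ => True
    | 0, false, _ => False
    | 1, _, x => ¬ x 0
    | 2, true, x => x 0 ∨ x 1
    | 2, false, x => x 0 ∧ x 1
    | _ + 3, f, _ => nomatch f
  RelMap _ _ := True

open Set Language

namespace PowersetFin

variable {α β κ ι : Type*}

def memHom (z : α) : Set α →[boolFinLang] Prop where
  toFun A := z ∈ A
  map_fun' {n} f _ :=
    match n, f with
    | 0, true | 0, false | 1, _ | 2, true | 2, false => rfl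
  map_rel' _ _ _ := trivial

def profile (w : ι → Set α) (z : α) (i : ι) : Prop := z ∈ w i

theorem mem_realize_iff (t : boolFinLang.Term ι) (w : ι → Set α) (z : α) :
    z ∈ t.realize w ↔ t.realize (profile w z) :=
  Iff.of_eq (HomClass.realize_term (memHom z)).symm

theorem realize_eq_preimage (t : boolFinLang.Term ι) (w : ι → Set α) :
    t.realize w = profile w ⁻¹' {s | t.realize s} :=
  Set.ext (mem_realize_iff t w)

theorem realize_eq_realize_iff (t₁ t₂ : boolFinLang.Term ι) (w : ι → Set α) :
    t₁.realize w = t₂.realize w ↔ ∀ s ∈ range (profile w), (t₁.realize s ↔ t₂.realize s) := by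
  simp only [Set.ext_iff, mem_realize_iff, forall_mem_range]

theorem finite_preimage_iff_forall_finite_fiber [Finite κ] (f : α → κ) (P : Set κ) :
    (f ⁻¹' P).Finite ↔ ∀ k ∈ P, (f ⁻¹' {k}).Finite :=
  ⟨fun hP _ hk => hP.subset (preimage_mono (singleton_subset_iff.mpr hk)),
    P.toFinite.preimage'⟩

theorem preimage_pair_mem_true (f : α → κ) (x : Set α) (k : κ) :
    (fun z => (f z, z ∈ x)) ⁻¹' {(k, True)} = f ⁻¹' {k} ∩ x := by
  ext z; simp

theorem preimage_pair_mem_false (f : α → κ) (x : Set α) (k : κ) :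
    (fun z => (f z, z ∈ x)) ⁻¹' {(k, False)} = f ⁻¹' {k} \ x := by
  ext z; simp

theorem exists_subset_infinite_sdiff_infinite {D : Set α} (hD : D.Infinite) :
    ∃ E ⊆ D, E.Infinite ∧ (D \ E).Infinite := by
  obtain ⟨E, F, rfl, hEF, hcard⟩ := hD.exists_union_disjoint_cardinal_eq_of_infinite
  have hiff : E.Infinite ↔ F.Infinite := by
    rw [← infinite_coe_iff, ← infinite_coe_iff, Cardinal.infinite_iff, Cardinal.infinite_iff, hcard]
  have hE : E.Infinite := by
    by_contra hE
    exact hD ((not_infinite.mp hE).union (not_infinite.mp (hiff.not.mp hE)))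
  refine ⟨E, subset_union_left, hE, ?_⟩
  rwa [union_sdiff_left, hEF.symm.sdiff_eq_left, ← hiff]

theorem exists_subset_encard_eq_of_add_eq {D : Set α} {a b : ℕ∞} (hab : a + b = D.encard) :
    ∃ E ⊆ D, E.encard = a ∧ (D \ E).encard = b := by
  have of_ne_top {a b : ℕ∞} (hab : a + b = D.encard) (ha : a ≠ ⊤) :
      ∃ E ⊆ D, E.encard = a ∧ (D \ E).encard = b := by
    obtain ⟨E, hED, hE⟩ := exists_subset_encard_eq (hab ▸ le_self_add : a ≤ D.encard)
    refine ⟨E, hED, hE, ?_⟩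
    have hsum := encard_sdiff_add_encard_of_subset hED
    rw [← hab, hE, add_comm a] at hsum
    exact WithTop.add_right_cancel ha hsum
  by_cases ha : a = ⊤
  · by_cases hb : b = ⊤
    · obtain ⟨E, hED, hE, hDE⟩ :=
        exists_subset_infinite_sdiff_infinite (encard_eq_top_iff.mp (by rw [← hab, ha, top_add]))
      exact ⟨E, hED, ha ▸ hE.encard_eq, hb ▸ hDE.encard_eq⟩
    · obtain ⟨F, hFD, hF, hDF⟩ := of_ne_top ((add_comm b a).trans hab) hb
      exact ⟨D \ F, sdiff_subset, hDF, by rwa [sdiff_sdiff_cancel_left hFD]⟩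
  · exact of_ne_top hab ha

def SameFiberSizes (f : α → κ) (g : β → κ) : Prop :=
  ∀ k, (f ⁻¹' {k}).encard = (g ⁻¹' {k}).encard

namespace SameFiberSizes

variable {f : α → κ} {g : β → κ}

theorem symm (h : SameFiberSizes f g) : SameFiberSizes g f :=
  fun k => (h k).symm

theorem of_subsingleton [Subsingleton κ] [Infinite α] [Infinite β] (f : α → κ) (g : β → κ) :
    SameFiberSizes f g := by
  intro k
  have hf : f ⁻¹' {k} = univ := eq_univ_of_forall fun _ => Subsingleton.elim _ _
  have hg : g ⁻¹' {k} = univ := eq_univ_of_forall fun _ => Subsingleton.elim _ _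
  rw [hf, hg, infinite_univ.encard_eq, infinite_univ.encard_eq]

theorem range_eq (h : SameFiberSizes f g) : range f = range g := by
  ext k
  simp only [← preimage_singleton_nonempty, ← encard_ne_zero, h k]

theorem finite_preimage_iff [Finite κ] (h : SameFiberSizes f g) (P : Set κ) :
    (f ⁻¹' P).Finite ↔ (g ⁻¹' P).Finite := by
  rw [finite_preimage_iff_forall_finite_fiber, finite_preimage_iff_forall_finite_fiber]
  simp only [← encard_lt_top_iff, h _]

theorem comp_injective (h : SameFiberSizes f g) {φ : κ → ι} (hφ : φ.Injective) :
    SameFiberSizes (φ ∘ f) (φ ∘ g) := by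
  intro k
  by_cases hk : k ∈ range φ
  · obtain ⟨j, rfl⟩ := hk
    rw [preimage_comp, preimage_comp, ← image_singleton, hφ.preimage_image]
    exact h j
  · rw [preimage_comp, preimage_comp, preimage_singleton_eq_empty.mpr hk]
    simp

theorem exists_extend (h : SameFiberSizes f g) (x : Set α) :
    ∃ y : Set β, SameFiberSizes (fun z => (f z, z ∈ x)) (fun z => (g z, z ∈ y)) := by
  choose E hEg hEx hEnx using fun k => exists_subset_encard_eq_of_add_eq (D := g ⁻¹' {k})
    (a := (f ⁻¹' {k} ∩ x).encard) (b := (f ⁻¹' {k} \ x).encard)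
    (by rw [add_comm, encard_sdiff_add_encard_inter, h k])
  have fiber_inter_iUnion k : g ⁻¹' {k} ∩ ⋃ j, E j = E k := by
    ext z
    simp only [mem_inter_iff, mem_iUnion]
    constructor
    · rintro ⟨hz, j, hzj⟩
      obtain rfl : j = k := (hEg j hzj).symm.trans hz
      exact hzj
    · exact fun hz => ⟨hEg k hz, k, hz⟩
  refine ⟨⋃ j, E j, ?_⟩
  rintro ⟨k, p⟩
  rcases Classical.propComplete p with rfl | rfl
  · rw [preimage_pair_mem_true, preimage_pair_mem_true, fiber_inter_iUnion]
    exact (hEx k).symm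
  · rw [preimage_pair_mem_false, preimage_pair_mem_false, ← sdiff_self_inter (t := ⋃ j, E j),
      fiber_inter_iUnion]
    exact (hEnx k).symm

end SameFiberSizes

def extendProfile {n : ℕ} (p : (ι ⊕ Fin n → Prop) × Prop) : ι ⊕ Fin (n + 1) → Prop :=
  Sum.elim (p.1 ∘ Sum.inl) (Fin.snoc (p.1 ∘ Sum.inr) p.2)

theorem extendProfile_injective {n : ℕ} :
    Function.Injective (extendProfile : (ι ⊕ Fin n → Prop) × Prop → _) := by
  rintro ⟨p, q⟩ ⟨p', q'⟩ h
  obtain ⟨hl, hr⟩ := Sum.elim_eq_iff.mp h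
  obtain ⟨hr, rfl⟩ := Fin.snoc_inj.mp hr
  rw [← Sum.elim_comp_inl_inr p, ← Sum.elim_comp_inl_inr p', hl, hr]

theorem profile_sumElim_snoc {n : ℕ} (v : ι → Set α) (xs : Fin n → Set α) (x : Set α) :
    profile (Sum.elim v (Fin.snoc xs x)) =
      extendProfile ∘ fun z => (profile (Sum.elim v xs) z, z ∈ x) := by
  ext z (i | i)
  · rfl
  · refine Fin.lastCases ?_ (fun j => ?_) i <;> simp [profile, extendProfile]

theorem exists_sameFiberSizes_snoc {n : ℕ} {v₁ : ι → Set α} {v₂ : ι → Set β}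
    {xs₁ : Fin n → Set α} {xs₂ : Fin n → Set β}
    (h : SameFiberSizes (profile (Sum.elim v₁ xs₁)) (profile (Sum.elim v₂ xs₂))) (x : Set α) :
    ∃ y, SameFiberSizes (profile (Sum.elim v₁ (Fin.snoc xs₁ x)))
      (profile (Sum.elim v₂ (Fin.snoc xs₂ y))) := by
  obtain ⟨y, hy⟩ := h.exists_extend x
  refine ⟨y, ?_⟩
  rw [profile_sumElim_snoc, profile_sumElim_snoc]
  exact hy.comp_injective extendProfile_injective

theorem realize_iff_of_sameFiberSizes [Finite ι] {n : ℕ} (φ : boolFinLang.BoundedFormula ι n)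
    {v₁ : ι → Set α} {v₂ : ι → Set β} {xs₁ : Fin n → Set α} {xs₂ : Fin n → Set β}
    (h : SameFiberSizes (profile (Sum.elim v₁ xs₁)) (profile (Sum.elim v₂ xs₂))) :
    φ.Realize v₁ xs₁ ↔ φ.Realize v₂ xs₂ := by
  induction φ with
  | falsum => rfl
  | equal t₁ t₂ => simp only [BoundedFormula.Realize, realize_eq_realize_iff, h.range_eq]
  | @rel _ l R ts =>
    match l, R with
    | 1, _ =>
      show ((ts 0).realize (Sum.elim v₁ xs₁)).Finite ↔ ((ts 0).realize (Sum.elim v₂ xs₂)).Finite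
      rw [realize_eq_preimage, realize_eq_preimage]
      exact h.finite_preimage_iff _
  | imp φ ψ ihφ ihψ => exact imp_congr (ihφ h) (ihψ h)
  | all φ ih =>
    simp only [BoundedFormula.realize_all]
    constructor
    · intro hφ y
      obtain ⟨x, hx⟩ := exists_sameFiberSizes_snoc h.symm y
      exact (ih hx.symm).mp (hφ x)
    · intro hφ x
      obtain ⟨y, hy⟩ := exists_sameFiberSizes_snoc h x
      exact (ih hy).mpr (hφ y)

end PowersetFin

/-- For infinite `I₁`, `I₂`, the structures `(Powerset(I₁), Fin)` and `(Powerset(I₂), Fin)`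
are elementarily equivalent. -/
theorem stmt8 (I₁ I₂ : Type) [Infinite I₁] [Infinite I₂] :
    boolFinLang.ElementarilyEquivalent (Set I₁) (Set I₂) :=
  elementarilyEquivalent_iff.mpr fun φ => PowersetFin.realize_iff_of_sameFiberSizes φ
    (PowersetFin.SameFiberSizes.of_subsingleton _ _)
end

section
/- Let (M_i)_{i∈I} and (N_i)_{i∈I} be families of structures in a first-order language L such that M_i ≡ N_i (elementarily equivalent) for every i ∈ I. Then the direct products ∏_{i∈I} M_i and ∏_{i∈I} N_i are elementarily equivalent as L-structures. -/
/-!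
Truth of a formula in a product `∏ M i` is a fixed condition, depending only on the formula, on
the sets of coordinates `i` at which finitely many auxiliary formulas hold in `M i`. Atomic
formulas hold in the product iff they hold everywhere, and implication is pointwise in the truth
values. For `∀ x, φ`, take the auxiliary formulas `θ_c` saying "some `x` realizes exactly the
pattern `c`" of the auxiliary formulas of `φ`: choosing a witness in each coordinate shows that
`∀ x, φ` holds iff the condition for `φ` holds for every assignment of patterns `c i` with
`θ_{c i}` true in `M i`. For sentences the auxiliary formulas are sentences, so these sets of
coordinates only depend on the theories of the factors.
-/

open FirstOrder FirstOrder.Language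

instance piStructure {L : FirstOrder.Language} {I : Type*} {M : I → Type*}
    [∀ i, L.Structure (M i)] : L.Structure (∀ i, M i) where
  funMap f x i := Structure.funMap f fun k => x k i
  RelMap r x := ∀ i, Structure.RelMap r fun k => x k i

open Structure BoundedFormula

theorem forall_pi_comp_iff {I : Type*} {β : I → Type*} {γ : Type*} (f : ∀ i, β i → γ)
    (Q : (I → γ) → Prop) :
    (∀ a : ∀ i, β i, Q fun i => f i (a i)) ↔
      ∀ c : I → γ, (∀ i, ∃ b, f i b = c i) → Q c := by
  refine ⟨fun h c hc => ?_, fun h a => h _ fun i => ⟨a i, rfl⟩⟩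
  choose a ha using hc
  exact funext ha ▸ h a

namespace FirstOrder.Language

variable {L : Language} {α I : Type*} {M : I → Type*} [∀ i, L.Structure (M i)] {n : ℕ}

theorem Term.realize_pi (t : L.Term α) (v : α → ∀ i, M i) (i : I) :
    t.realize v i = t.realize fun a => v a i := by
  induction t with
  | var a => rfl
  | func f ts ih => exact congrArg (funMap f) (funext ih)

theorem Term.realize_sumElim_pi (t : L.Term (α ⊕ Fin n)) (v : α → ∀ i, M i)
    (xs : Fin n → ∀ i, M i) (i : I) :
    t.realize (Sum.elim v xs) i = t.realize (Sum.elim (fun a => v a i) fun k => xs k i) := by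
  rw [realize_pi]
  congr
  funext a
  cases a <;> rfl

theorem BoundedFormula.realize_equal_pi (t₁ t₂ : L.Term (α ⊕ Fin n)) (v : α → ∀ i, M i)
    (xs : Fin n → ∀ i, M i) :
    (equal t₁ t₂).Realize v xs ↔
      ∀ i, (equal t₁ t₂).Realize (fun a => v a i) fun k => xs k i := by
  simp only [Realize, funext_iff, Term.realize_sumElim_pi]

theorem BoundedFormula.realize_rel_pi {l : ℕ} (R : L.Relations l)
    (ts : Fin l → L.Term (α ⊕ Fin n)) (v : α → ∀ i, M i) (xs : Fin n → ∀ i, M i) :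
    (rel R ts).Realize v xs ↔ ∀ i, (rel R ts).Realize (fun a => v a i) fun k => xs k i := by
  show (∀ i, RelMap R fun k => (ts k).realize (Sum.elim v xs) i) ↔ _
  simp only [Term.realize_sumElim_pi]
  rfl

/-- A finite family of formulas `atom j` and a condition `pred` on the sets of coordinates at
which they hold; `φ.piReduction I` is one that decides `φ` in every product indexed by `I`. -/
structure PiReduction (L : Language) (α I : Type*) (n : ℕ) where
  Idx : Type
  [finite : Finite Idx]
  atom : Idx → L.BoundedFormula α n
  pred : (Idx → Set I) → Prop

attribute [instance] PiReduction.finite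

namespace PiReduction

def sets (R : PiReduction L α I n) (v : α → ∀ i, M i) (xs : Fin n → ∀ i, M i) :
    R.Idx → Set I :=
  fun j => {i | (R.atom j).Realize (fun a => v a i) fun k => xs k i}

open scoped Classical in
noncomputable def profile {N : Type*} [L.Structure N] (R : PiReduction L α I (n + 1))
    (v : α → N) (xs : Fin n → N) (b : N) : R.Idx → Bool :=
  fun j => decide ((R.atom j).Realize v (Fin.snoc xs b))

def falsum : PiReduction L α I n := ⟨Empty, Empty.elim, fun _ => False⟩

def atomic (φ : L.BoundedFormula α n) : PiReduction L α I n :=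
  ⟨Unit, fun _ => φ, fun S => S () = Set.univ⟩

def imp (R₁ R₂ : PiReduction L α I n) : PiReduction L α I n :=
  ⟨R₁.Idx ⊕ R₂.Idx, Sum.elim R₁.atom R₂.atom,
    fun S => R₁.pred (S ∘ Sum.inl) → R₂.pred (S ∘ Sum.inr)⟩

/-- The atom indexed by `c` says that some witness has profile `c`. -/
noncomputable def all (R : PiReduction L α I (n + 1)) : PiReduction L α I n :=
  ⟨R.Idx → Bool, fun c => (iInf fun j => if c j then R.atom j else (R.atom j).not).ex,
    fun S => ∀ c : I → R.Idx → Bool, (∀ i, i ∈ S (c i)) → R.pred fun j => {i | c i j}⟩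

theorem realize_all_atom {N : Type*} [L.Structure N] (R : PiReduction L α I (n + 1))
    (c : R.Idx → Bool) (v : α → N) (xs : Fin n → N) :
    (R.all.atom c).Realize v xs ↔ ∃ b, R.profile v xs b = c := by
  simp only [all, realize_ex, realize_iInf, funext_iff, profile]
  refine exists_congr fun b => forall_congr' fun j => ?_
  cases c j <;> simp

theorem sets_snoc (R : PiReduction L α I (n + 1)) (v : α → ∀ i, M i)
    (xs : Fin n → ∀ i, M i) (a : ∀ i, M i) :
    R.sets v (Fin.snoc xs a) =
      fun j => {i | R.profile (fun a => v a i) (fun k => xs k i) (a i) j} := by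
  funext j
  ext i
  have : (fun k => (Fin.snoc xs a : Fin (n + 1) → ∀ i, M i) k i) =
      Fin.snoc (fun k => xs k i) (a i) := by
    funext k
    refine Fin.lastCases ?_ (fun k => ?_) k <;> simp
  simp [sets, profile, this]

theorem all_pred_sets_iff (R : PiReduction L α I (n + 1)) (v : α → ∀ i, M i)
    (xs : Fin n → ∀ i, M i) :
    R.all.pred (R.all.sets v xs) ↔ ∀ a : ∀ i, M i, R.pred (R.sets v (Fin.snoc xs a)) := by
  simp only [sets_snoc]
  rw [forall_pi_comp_iff (fun i => R.profile (fun a => v a i) fun k => xs k i)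
    fun c => R.pred fun j => {i | c i j}]
  simp only [← realize_all_atom]
  rfl

end PiReduction

open PiReduction

noncomputable def BoundedFormula.piReduction (I : Type*) :
    ∀ {n}, L.BoundedFormula α n → PiReduction L α I n
  | _, .falsum => .falsum
  | _, .equal t₁ t₂ => atomic (.equal t₁ t₂)
  | _, .rel R ts => atomic (.rel R ts)
  | _, .imp φ ψ => (piReduction I φ).imp (piReduction I ψ)
  | _, .all φ => (piReduction I φ).all

theorem BoundedFormula.realize_pi_iff (φ : L.BoundedFormula α n) (v : α → ∀ i, M i)
    (xs : Fin n → ∀ i, M i) :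
    φ.Realize v xs ↔ (φ.piReduction I).pred ((φ.piReduction I).sets v xs) := by
  induction φ with
  | falsum => exact Iff.rfl
  | equal t₁ t₂ => simp [piReduction, atomic, sets, Set.eq_univ_iff_forall, realize_equal_pi]
  | rel R ts => simp [piReduction, atomic, sets, Set.eq_univ_iff_forall, realize_rel_pi]
  | imp φ ψ ih₁ ih₂ => rw [realize_imp, ih₁, ih₂]; rfl
  | all φ ih => simp only [realize_all, ih, piReduction, all_pred_sets_iff]

theorem realize_sentence_pi_iff (φ : L.Sentence) :
    (∀ i, M i) ⊨ φ ↔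
      (φ.piReduction I).pred fun j => {i | M i ⊨ (φ.piReduction I).atom j} := by
  rw [Sentence.Realize, Formula.Realize, realize_pi_iff]
  congr! with j
  ext i
  simp only [sets, Set.mem_ofPred_eq, Sentence.Realize, Formula.Realize]
  congr!

end FirstOrder.Language

/-- Feferman–Vaught: if `M i ≡ N i` for all `i`, then `∏ M i ≡ ∏ N i`. -/
theorem stmt9 {L : FirstOrder.Language} {I : Type*} (M N : I → Type*)
    [∀ i, L.Structure (M i)] [∀ i, L.Structure (N i)]
    (h : ∀ i, L.ElementarilyEquivalent (M i) (N i)) :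
    L.ElementarilyEquivalent (∀ i, M i) (∀ i, N i) := by
  refine elementarilyEquivalent_iff.2 fun φ => ?_
  simp only [realize_sentence_pi_iff, (h _).realize_sentence]
end

section
/- Let (h_i : M_i → N_i)_{i∈I} be a family of elementary embeddings of L-structures. Then the product map ∏ h_i : ∏_{i∈I} M_i → ∏_{i∈I} N_i is an elementary embedding of the product L-structures. -/
/-!
Feferman–Vaught for products: the truth of a formula at a tuple of the product `∏ M i` depends
only on which formulas of a finite set `s` hold at the coordinate tuples in the factors `M i`.
Atomic formulas hold in a product iff they hold coordinatewise, and implications are handled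
by the union of the two sets. For `∀ x, φ`, with `s` the set for `φ`, take the formulas
`∃ x, ⋀_{ψ ∈ s} ±ψ`, one for each sign pattern: if two tuples agree on these in every
coordinate, then each witness on one side can be matched, coordinate by coordinate, by a
witness on the other side with the same truth values on `s`.
Since every `h i` preserves all formulas, `x` and `(h i (x i))_i` agree coordinatewise on any
set of formulas, so `∏ h i` is elementary.
-/

open FirstOrder FirstOrder.Language

theorem Fin.snoc_pi_apply {n : ℕ} {ι : Type*} {M : ι → Type*} (xs : Fin n → ∀ i, M i)
    (c : ∀ i, M i) (i : ι) :
    (fun k => Fin.snoc (α := fun _ => ∀ i, M i) xs c k i) = Fin.snoc (fun k => xs k i) (c i) :=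
  Fin.comp_snoc (fun x : ∀ i, M i => x i) xs c

namespace FirstOrder.Language

variable {L : Language} {I : Type*} {α : Type*} {n : ℕ}

def Hom.piEval {M : I → Type*} [∀ i, L.Structure (M i)] (i : I) : (∀ i, M i) →[L] M i where
  toFun x := x i
  map_rel' _ _ h := h i

namespace BoundedFormula

theorem IsAtomic.realize_pi {M : I → Type*} [∀ i, L.Structure (M i)]
    {φ : L.BoundedFormula α n} (hφ : φ.IsAtomic) (v : α → ∀ i, M i) (xs : Fin n → ∀ i, M i) :
    φ.Realize v xs ↔ ∀ i, φ.Realize (fun a => v a i) (fun k => xs k i) := by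
  have hterm (t : L.Term (α ⊕ Fin n)) (i : I) :
      t.realize (Sum.elim v xs) i = t.realize (Sum.elim (fun a => v a i) (fun k => xs k i)) := by
    have := HomClass.realize_term (Hom.piEval i) (t := t) (v := Sum.elim v xs)
    rw [Sum.comp_elim] at this
    exact this.symm
  cases hφ with
  | equal t₁ t₂ => simp only [realize_bdEqual, funext_iff, hterm]
  | rel R ts => exact forall_congr' fun i => by simp only [hterm, realize_rel]

open Classical in
noncomputable def existsPattern (s : Set (L.BoundedFormula α (n + 1))) [Finite s]
    (ε : s → Prop) : L.BoundedFormula α n :=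
  ∃' iInf fun ψ : s => if ε ψ then ψ.1 else ∼ψ.1

theorem realize_existsPattern {M : Type*} [L.Structure M] {s : Set (L.BoundedFormula α (n + 1))}
    [Finite s] {ε : s → Prop} {v : α → M} {xs : Fin n → M} :
    (existsPattern s ε).Realize v xs ↔ ∃ c : M, ∀ ψ : s, ψ.1.Realize v (Fin.snoc xs c) ↔ ε ψ := by
  simp only [existsPattern, realize_ex, realize_iInf]
  refine exists_congr fun c => forall_congr' fun ψ => ?_
  split_ifs with h <;> simp [h]

def AgreeOn (s : Set (L.BoundedFormula α n)) {M N : Type*} [L.Structure M] [L.Structure N]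
    (v : α → M) (xs : Fin n → M) (w : α → N) (ys : Fin n → N) : Prop :=
  ∀ ψ ∈ s, ψ.Realize v xs ↔ ψ.Realize w ys

namespace AgreeOn

variable {M N : Type*} [L.Structure M] [L.Structure N] {v : α → M} {xs : Fin n → M} {w : α → N}
  {ys : Fin n → N}

theorem symm {s : Set (L.BoundedFormula α n)} (h : AgreeOn s v xs w ys) : AgreeOn s w ys v xs :=
  fun ψ hψ => (h ψ hψ).symm

theorem mono {s t : Set (L.BoundedFormula α n)} (hst : s ⊆ t) (h : AgreeOn t v xs w ys) :
    AgreeOn s v xs w ys :=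
  fun ψ hψ => h ψ (hst hψ)

theorem exists_snoc_of_existsPattern {s : Set (L.BoundedFormula α (n + 1))} [Finite s]
    (h : AgreeOn (Set.range (existsPattern s)) v xs w ys) (b : N) :
    ∃ c : M, AgreeOn s v (Fin.snoc xs c) w (Fin.snoc ys b) := by
  have hb : (existsPattern s fun ψ => ψ.1.Realize w (Fin.snoc ys b)).Realize w ys :=
    realize_existsPattern.2 ⟨b, fun _ => Iff.rfl⟩
  obtain ⟨c, hc⟩ := realize_existsPattern.1 ((h _ ⟨_, rfl⟩).2 hb)
  exact ⟨c, fun ψ hψ => hc ⟨ψ, hψ⟩⟩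

end AgreeOn

def DeterminesOnPi (P Q : I → Type*) [∀ i, L.Structure (P i)] [∀ i, L.Structure (Q i)]
    (s : Set (L.BoundedFormula α n)) (φ : L.BoundedFormula α n) : Prop :=
  ∀ (v : α → ∀ i, P i) (xs : Fin n → ∀ i, P i) (w : α → ∀ i, Q i) (ys : Fin n → ∀ i, Q i),
    (∀ i, AgreeOn s (fun a => v a i) (fun k => xs k i) (fun a => w a i) (fun k => ys k i)) →
      (φ.Realize v xs ↔ φ.Realize w ys)

namespace DeterminesOnPi

variable {P Q : I → Type*} [∀ i, L.Structure (P i)] [∀ i, L.Structure (Q i)]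

theorem falsum : DeterminesOnPi P Q (∅ : Set (L.BoundedFormula α n)) ⊥ :=
  fun _ _ _ _ _ => Iff.rfl

theorem singleton_of_isAtomic {φ : L.BoundedFormula α n} (hφ : φ.IsAtomic) :
    DeterminesOnPi P Q {φ} φ := fun v xs w ys h => by
  rw [hφ.realize_pi, hφ.realize_pi]
  exact forall_congr' fun i => h i φ rfl

theorem imp {s₁ s₂ : Set (L.BoundedFormula α n)} {φ₁ φ₂ : L.BoundedFormula α n}
    (h₁ : DeterminesOnPi P Q s₁ φ₁) (h₂ : DeterminesOnPi P Q s₂ φ₂) :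
    DeterminesOnPi P Q (s₁ ∪ s₂) (φ₁.imp φ₂) := fun v xs w ys h => by
  simp only [realize_imp]
  exact imp_congr (h₁ v xs w ys fun i => (h i).mono Set.subset_union_left)
    (h₂ v xs w ys fun i => (h i).mono Set.subset_union_right)

theorem all {s : Set (L.BoundedFormula α (n + 1))} [Finite s] {φ : L.BoundedFormula α (n + 1)}
    (hφ : DeterminesOnPi P Q s φ) : DeterminesOnPi P Q (Set.range (existsPattern s)) φ.all := by
  intro v xs w ys h
  simp only [realize_all]
  constructor
  · intro hP b
    choose c hc using fun i => (h i).exists_snoc_of_existsPattern (b i)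
    refine (hφ _ _ _ _ fun i => ?_).1 (hP c)
    rw [Fin.snoc_pi_apply, Fin.snoc_pi_apply]
    exact hc i
  · intro hQ c
    choose b hb using fun i => (h i).symm.exists_snoc_of_existsPattern (c i)
    refine (hφ _ _ _ _ fun i => ?_).2 (hQ b)
    rw [Fin.snoc_pi_apply, Fin.snoc_pi_apply]
    exact (hb i).symm

end DeterminesOnPi

theorem exists_finite_determinesOnPi (φ : L.BoundedFormula α n) :
    ∃ s : Set (L.BoundedFormula α n), s.Finite ∧
      ∀ (P : I → Type*) (Q : I → Type*) [∀ i, L.Structure (P i)] [∀ i, L.Structure (Q i)],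
        DeterminesOnPi P Q s φ := by
  induction φ with
  | falsum => exact ⟨∅, Set.finite_empty, fun _ _ _ _ => DeterminesOnPi.falsum⟩
  | equal t₁ t₂ => exact ⟨_, Set.finite_singleton _,
      fun _ _ _ _ => DeterminesOnPi.singleton_of_isAtomic (IsAtomic.equal t₁ t₂)⟩
  | rel R ts => exact ⟨_, Set.finite_singleton _,
      fun _ _ _ _ => DeterminesOnPi.singleton_of_isAtomic (IsAtomic.rel R ts)⟩
  | imp φ₁ φ₂ ih₁ ih₂ =>
    obtain ⟨s₁, hs₁, h₁⟩ := ih₁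
    obtain ⟨s₂, hs₂, h₂⟩ := ih₂
    exact ⟨s₁ ∪ s₂, hs₁.union hs₂, fun P Q _ _ => (h₁ P Q).imp (h₂ P Q)⟩
  | all φ ih =>
    obtain ⟨s, hs, h⟩ := ih
    have := hs.to_subtype
    exact ⟨_, Set.finite_range _, fun P Q _ _ => (h P Q).all⟩

theorem realize_pi_elementaryEmbedding {M N : I → Type*} [∀ i, L.Structure (M i)]
    [∀ i, L.Structure (N i)] (h : ∀ i, M i ↪ₑ[L] N i) (φ : L.BoundedFormula α n)
    (v : α → ∀ i, M i) (xs : Fin n → ∀ i, M i) :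
    φ.Realize (fun a i => h i (v a i)) (fun k i => h i (xs k i)) ↔ φ.Realize v xs := by
  obtain ⟨s, -, hs⟩ := exists_finite_determinesOnPi φ
  exact (hs M N v xs _ _ fun i ψ _ => ((h i).map_boundedFormula ψ _ _).symm).symm

end BoundedFormula

namespace ElementaryEmbedding

def piMap {M N : I → Type*} [∀ i, L.Structure (M i)] [∀ i, L.Structure (N i)]
    (h : ∀ i, M i ↪ₑ[L] N i) : (∀ i, M i) ↪ₑ[L] ∀ i, N i where
  toFun x i := h i (x i)
  map_formula' _ φ x := by
    have := BoundedFormula.realize_pi_elementaryEmbedding h φ x default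
    rwa [Subsingleton.elim (fun k i => h i ((default : Fin 0 → ∀ i, M i) k i)) default] at this

end ElementaryEmbedding

end FirstOrder.Language

/-- If `h i : M i → N i` are elementary embeddings, then the product map
`∏ h i : ∏ M i → ∏ N i` is an elementary embedding. -/
theorem stmt10 {L : FirstOrder.Language} {I : Type*} (M N : I → Type*)
    [∀ i, L.Structure (M i)] [∀ i, L.Structure (N i)]
    (h : ∀ i, L.ElementaryEmbedding (M i) (N i)) :
    ∃ g : L.ElementaryEmbedding (∀ i, M i) (∀ i, N i),
      ∀ (x : ∀ i, M i) (i : I), g x i = h i (x i) :=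
  ⟨ElementaryEmbedding.piMap h, fun _ _ => rfl⟩
end

section
/- If K₁ and K₂ are arithmetically equivalent number fields (same splitting type at all but finitely many primes), then [K₁ : ℚ] = [K₂ : ℚ]. -/
/-!
At a prime `p` unramified in `K`, every prime of `𝓞 K` above `p` has ramification index `1`,
so the fundamental identity `∑ eᵢ fᵢ = [K : ℚ]` reads off the degree as the sum of the
splitting type of `p`. Only the finitely many primes dividing a discriminant ramify, so some
prime is unramified in both fields and has the same splitting type in both.
-/

open NumberField UniqueFactorizationMonoid

open Classical in
/-- The splitting type of `p` in `K`: the multiset of residue degrees of the distinct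
primes of `𝒪_K` above `p`. -/
noncomputable def splittingType (K : Type) [Field K] [NumberField K] (p : ℕ) : Multiset ℕ :=
  ((factors (Ideal.map (algebraMap ℤ (𝓞 K)) (Ideal.span {(p : ℤ)}))).toFinset).val.map
    fun P => Ideal.inertiaDeg' (Ideal.span {(p : ℤ)}) P

theorem Int.finite_setOf_prime_natCast_dvd {d : ℤ} (hd : d ≠ 0) :
    {p : ℕ | p.Prime ∧ (p : ℤ) ∣ d}.Finite :=
  d.natAbs.primeFactors.finite_toSet.subset fun _ ⟨hp, hpd⟩ =>
    Nat.mem_primeFactors.mpr ⟨hp, Int.natCast_dvd.mp hpd, Int.natAbs_ne_zero.mpr hd⟩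

open Ideal in
theorem NumberField.sum_inertiaDeg'_eq_finrank_of_not_dvd_discr (K : Type*) [Field K]
    [NumberField K] {p : ℤ} (hp : Prime p) (hpK : ¬ p ∣ discr K) :
    ∑ P ∈ IsDedekindDomain.primesOverFinset (span {p}) (𝓞 K), (span {p}).inertiaDeg' P =
      Module.finrank ℚ K := by
  have : (span {p}).IsMaximal := PrincipalIdealRing.isMaximal_of_irreducible hp.irreducible
  have hp0 : span {p} ≠ ⊥ := by simpa using hp.ne_zero
  have hunramified := (not_dvd_discr_iff_forall_mem K (𝓞 K) hp).mp hpK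
  rw [Finset.sum_subtype _ (fun P => IsDedekindDomain.mem_primesOverFinset_iff hp0 _),
    ← RingOfIntegers.rank, ← sum_ramification_inertia_eq_finrank (span {p})]
  refine Finset.sum_congr rfl fun Q _ => ?_
  have := hunramified Q.1 inferInstance (Q.2.2.over.le (mem_span_singleton_self p))
  rw [ramificationIdx_eq_one, one_mul, inertiaDeg'_eq_inertiaDeg]

theorem NumberField.sum_splittingType_eq_finrank_of_not_dvd_discr (K : Type) [Field K]
    [NumberField K] {p : ℕ} (hp : p.Prime) (hpK : ¬ (p : ℤ) ∣ discr K) :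
    (splittingType K p).sum = Module.finrank ℚ K :=
  sum_inertiaDeg'_eq_finrank_of_not_dvd_discr K (Nat.prime_iff_prime_int.mp hp) hpK

/-- Arithmetically equivalent number fields have the same degree over `ℚ`. -/
theorem stmt14 (K₁ K₂ : Type) [Field K₁] [NumberField K₁] [Field K₂] [NumberField K₂]
    (h : {p : ℕ | p.Prime ∧ splittingType K₁ p ≠ splittingType K₂ p}.Finite) :
    Module.finrank ℚ K₁ = Module.finrank ℚ K₂ := by
  have hbad := h.union <| (Int.finite_setOf_prime_natCast_dvd (discr_ne_zero K₁)).union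
    (Int.finite_setOf_prime_natCast_dvd (discr_ne_zero K₂))
  obtain ⟨p, hp, hpgood⟩ := (Nat.infinite_setOfPred_prime.sdiff hbad).nonempty
  simp only [Set.mem_union, Set.mem_ofPred_eq, not_or, not_and, not_not] at hpgood
  obtain ⟨hsplit, hp₁, hp₂⟩ := hpgood
  rw [← sum_splittingType_eq_finrank_of_not_dvd_discr K₁ hp (hp₁ hp),
    ← sum_splittingType_eq_finrank_of_not_dvd_discr K₂ hp (hp₂ hp), hsplit hp]
end
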